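/- The softmax function F : ℝⁿ → ℝⁿ, F(x)_i = exp(x_i)/Σ_j exp(x_j), is Lipschitz with respect to the Euclidean norm: there exists a constant Γ (one may take Γ = 1) such that ‖F(x) − F(y)‖₂ ≤ Γ ‖x − y‖₂ for all x, y ∈ ℝⁿ. -/

import Mathlib

/-! The Jacobian of softmax at `x` is `diag p - p pᵀ` with `p = softmax x`, a vector with
`pᵢ ≥ 0` and `∑ pᵢ ≤ 1`. It maps `v` to `(pᵢ (vᵢ - m))ᵢ` with `m = ⟨p, v⟩`, and
`∑ pᵢ² (vᵢ - m)² ≤ ∑ pᵢ (vᵢ - m)² ≤ ∑ pᵢ vᵢ² - m² ≤ ‖v‖²`, so its operator norm is at most `1`;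
the mean value inequality then makes softmax `1`-Lipschitz. -/

open Finset

noncomputable def softmax (n : ℕ) (x : EuclideanSpace ℝ (Fin n)) :
    EuclideanSpace ℝ (Fin n) :=
  WithLp.toLp 2 (fun i => Real.exp (x i) / ∑ j : Fin n, Real.exp (x j))

open Matrix Real

noncomputable def softmaxJacobian {ι : Type*} [DecidableEq ι] (p : ι → ℝ) : Matrix ι ι ℝ :=
  diagonal p - vecMulVec p p

section SubProbabilityVector

variable {ι : Type*} [Fintype ι] {p : ι → ℝ}

lemma softmaxJacobian_mulVec [DecidableEq ι] (p v : ι → ℝ) :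
    softmaxJacobian p *ᵥ v = fun i => p i * (v i - p ⬝ᵥ v) := by
  ext i
  simp [softmaxJacobian, sub_mulVec, vecMulVec_mulVec, mulVec_diagonal, mul_sub, mul_comm]

lemma sum_sq_mul_sub_dotProduct_le (hp : ∀ i, 0 ≤ p i) (hp1 : ∑ i, p i ≤ 1) (v : ι → ℝ) :
    ∑ i, (p i * (v i - p ⬝ᵥ v)) ^ 2 ≤ ∑ i, v i ^ 2 := by
  set m := p ⬝ᵥ v
  have hp_le_one : ∀ i, p i ≤ 1 := fun i =>
    (single_le_sum (fun j _ => hp j) (mem_univ i)).trans hp1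
  calc ∑ i, (p i * (v i - m)) ^ 2
      ≤ ∑ i, p i * (v i - m) ^ 2 := sum_le_sum fun i _ => by
        rw [mul_pow]
        exact mul_le_mul_of_nonneg_right (by nlinarith [hp i, hp_le_one i]) (sq_nonneg _)
    _ = ∑ i, p i * v i ^ 2 - m ^ 2 * (2 - ∑ i, p i) := by
        have expand : ∀ i, p i * (v i - m) ^ 2 = p i * v i ^ 2 - 2 * m * (p i * v i) + m ^ 2 * p i :=
          fun i => by ring
        rw [sum_congr rfl fun i _ => expand i, sum_add_distrib, sum_sub_distrib, ← mul_sum, ← mul_sum]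
        change _ - 2 * m * m + _ = _
        ring
    _ ≤ ∑ i, p i * v i ^ 2 := by nlinarith [sq_nonneg m]
    _ ≤ ∑ i, v i ^ 2 := sum_le_sum fun i _ => by nlinarith [hp i, hp_le_one i, sq_nonneg (v i)]

lemma norm_toEuclideanCLM_softmaxJacobian_le_one [DecidableEq ι] (hp : ∀ i, 0 ≤ p i)
    (hp1 : ∑ i, p i ≤ 1) : ‖toEuclideanCLM (𝕜 := ℝ) (softmaxJacobian p)‖ ≤ 1 := by
  refine ContinuousLinearMap.opNorm_le_bound _ zero_le_one fun v => ?_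
  rw [one_mul, EuclideanSpace.norm_eq, EuclideanSpace.norm_eq]
  refine Real.sqrt_le_sqrt ?_
  simpa only [Real.norm_eq_abs, sq_abs, ofLp_toEuclideanCLM, softmaxJacobian_mulVec]
    using sum_sq_mul_sub_dotProduct_le hp hp1 v.ofLp

end SubProbabilityVector

section Softmax

variable {n : ℕ}

lemma softmax_nonneg (x : EuclideanSpace ℝ (Fin n)) (i : Fin n) : 0 ≤ softmax n x i :=
  div_nonneg (exp_pos _).le (sum_nonneg fun _ _ => (exp_pos _).le)

lemma sum_softmax_le_one (x : EuclideanSpace ℝ (Fin n)) : ∑ i, softmax n x i ≤ 1 := by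
  simp only [softmax, ← sum_div]
  exact div_self_le_one _

lemma hasFDerivAt_softmax_apply (x : EuclideanSpace ℝ (Fin n)) (i : Fin n) :
    HasFDerivAt (fun y => softmax n y i)
      (PiLp.proj 2 _ i ∘L toEuclideanCLM (𝕜 := ℝ) (softmaxJacobian (softmax n x).ofLp)) x := by
  have hexp : ∀ j, HasFDerivAt (fun y : EuclideanSpace ℝ (Fin n) => exp (y j))
      (exp (x j) • PiLp.proj 2 (fun _ => ℝ) j) x := fun j => (PiLp.hasFDerivAt_apply 2 x j).exp
  have hsum_pos : 0 < ∑ j, exp (x j) :=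
    (exp_pos (x i)).trans_le (single_le_sum (fun j _ => (exp_pos (x j)).le) (mem_univ i))
  have hquot := (hexp i).fun_mul ((hasDerivAt_inv hsum_pos.ne').comp_hasFDerivAt x
    (HasFDerivAt.fun_sum fun j _ => hexp j))
  simp only [softmax, WithLp.ofLp_toLp, div_eq_mul_inv]
  refine hquot.congr_fderiv ?_
  ext v
  have hmean : ∑ j, exp (x j) * (∑ k, exp (x k))⁻¹ * v j
      = (∑ k, exp (x k))⁻¹ * ∑ j, exp (x j) * v j := by
    rw [mul_sum]; exact sum_congr rfl fun j _ => by ring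
  simp only [ContinuousLinearMap.comp_apply, PiLp.proj_apply, ofLp_toEuclideanCLM,
    softmaxJacobian_mulVec, dotProduct, hmean, _root_.add_apply, _root_.neg_apply,
    _root_.smul_apply, _root_.sum_apply, Function.comp_apply, neg_smul, smul_neg, smul_eq_mul]
  field_simp
  ring

lemma hasFDerivAt_softmax (x : EuclideanSpace ℝ (Fin n)) :
    HasFDerivAt (softmax n) (toEuclideanCLM (𝕜 := ℝ) (softmaxJacobian (softmax n x).ofLp)) x :=
  hasFDerivWithinAt_univ.mp <|
    (hasFDerivWithinAt_piLp 2).2 fun i => (hasFDerivAt_softmax_apply x i).hasFDerivWithinAt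

theorem lipschitzWith_softmax (n : ℕ) : LipschitzWith 1 (softmax n) :=
  lipschitzWith_of_nnnorm_fderiv_le (fun x => (hasFDerivAt_softmax x).differentiableAt) fun x => by
    rw [(hasFDerivAt_softmax x).fderiv, ← NNReal.coe_le_coe, coe_nnnorm]
    exact norm_toEuclideanCLM_softmaxJacobian_le_one (softmax_nonneg x) (sum_softmax_le_one x)

end Softmax

theorem softmax_lipschitz_general (n : ℕ) :
    ∃ Γ : ℝ, Γ = 1 ∧ ∀ x y : EuclideanSpace ℝ (Fin n),
      ‖softmax n x - softmax n y‖ ≤ Γ * ‖x - y‖ :=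
  ⟨1, rfl, fun x y => by simpa [dist_eq_norm] using (lipschitzWith_softmax n).dist_le_mul x y⟩

/-- Softmax is Lipschitz with respect to the Euclidean norm; one may take the Lipschitz
constant `Γ = 1`. -/
theorem softmax_lipschitz (n : ℕ) (hn : 1 ≤ n) :
    ∃ Γ : ℝ, Γ = 1 ∧ ∀ x y : EuclideanSpace ℝ (Fin n),
      ‖softmax n x - softmax n y‖ ≤ Γ * ‖x - y‖ :=
  softmax_lipschitz_general n
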